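/- Let G ≤ Sym(X) be a transitive permutation group on a finite set X with a normal block system 𝓑, let N = fix_G(𝓑), fix a block B₀ ∈ 𝓑, and suppose T = Soc(N^{B₀}), the socle of the permutation group induced by N on B₀, is a transitive nonabelian simple group. Then: (1) Soc(N) is an internal direct product T₁ × ⋯ × T_k of subgroups each isomorphic to T, the supports C_i = supp(T_i) (1 ≤ i ≤ k) are pairwise disjoint, and 𝓒 = {C₁, …, C_k} is a block system of G with 𝓑 ⪯ 𝓒 (every block of 𝓑 is contained in a block of 𝓒); (2) for each i and each block B ∈ 𝓑 with B ⊆ C_i, the pointwise stabilizer of B in N equals the pointwise stabilizer of C_i in N, and this pointwise stabilizer intersects T_i trivially. -/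

import Mathlib

open Equiv Pointwise

section PermGroupDefs

variable {Y : Type*}

/-- A subgroup of `Equiv.Perm Y` is transitive if it acts transitively on `Y`. -/
def SubTrans (G : Subgroup (Equiv.Perm Y)) : Prop :=
  ∀ x y : Y, ∃ g ∈ G, g x = y

/-- A subgroup of `Equiv.Perm Y` is semiregular if only its identity fixes a point. -/
def SubSemiregular (H : Subgroup (Equiv.Perm Y)) : Prop :=
  ∀ h ∈ H, (∃ x : Y, h x = x) → h = 1

/-- A subgroup of `Equiv.Perm Y` is regular if it is transitive and semiregular. -/
def SubRegular (H : Subgroup (Equiv.Perm Y)) : Prop :=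
  SubTrans H ∧ SubSemiregular H

/-- Two-transitivity. -/
def Sub2Trans (G : Subgroup (Equiv.Perm Y)) : Prop :=
  ∀ x₁ x₂ y₁ y₂ : Y, x₁ ≠ x₂ → y₁ ≠ y₂ → ∃ g ∈ G, g x₁ = y₁ ∧ g x₂ = y₂

/-- Orbit of a point under a subgroup of `Equiv.Perm Y`. -/
def SubOrbit (H : Subgroup (Equiv.Perm Y)) (x : Y) : Set Y :=
  {y | ∃ h ∈ H, h x = y}

/-- The set of orbits of a subgroup of `Equiv.Perm Y`. -/
def SubOrbits (H : Subgroup (Equiv.Perm Y)) : Set (Set Y) :=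
  Set.range (SubOrbit H)

/-- A block for a subgroup of `Equiv.Perm Y`. -/
def SubIsBlock (G : Subgroup (Equiv.Perm Y)) (B : Set Y) : Prop :=
  ∀ g ∈ G, (g : Equiv.Perm Y) '' B = B ∨ Disjoint ((g : Equiv.Perm Y) '' B) B

/-- Primitivity: transitive and the only blocks are trivial. -/
def SubPrimitive (G : Subgroup (Equiv.Perm Y)) : Prop :=
  SubTrans G ∧ ∀ B : Set Y, B.Nonempty → SubIsBlock G B → B = Set.univ ∨ ∃ x, B = {x}

/-- A block system: a `G`-invariant partition of `Y`. -/
def IsBlockSystem (G : Subgroup (Equiv.Perm Y)) (P : Set (Set Y)) : Prop :=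
  (∀ B ∈ P, B.Nonempty) ∧ (∀ x : Y, ∃! B : Set Y, B ∈ P ∧ x ∈ B) ∧
    (∀ g ∈ G, ∀ B ∈ P, (g : Equiv.Perm Y) '' B ∈ P)

/-- A normal block system: the set of orbits of a normal subgroup. -/
def IsNormalBlockSystem (G : Subgroup (Equiv.Perm Y)) (P : Set (Set Y)) : Prop :=
  IsBlockSystem G P ∧
    ∃ N : Subgroup (Equiv.Perm Y), N ≤ G ∧ (∀ g ∈ G, ∀ x ∈ N, g * x * g⁻¹ ∈ N) ∧
      P = SubOrbits N

/-- `P` refines `Q`: every block of `P` is contained in a block of `Q`. -/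
def Refines (P Q : Set (Set Y)) : Prop :=
  ∀ B ∈ P, ∃ C ∈ Q, B ⊆ C

/-- The partition of `Y` into singletons. -/
def SingletonPartition (Y : Type*) : Set (Set Y) :=
  Set.range fun x : Y => ({x} : Set Y)

/-- A minimal (nontrivial) block system. -/
def IsMinimalBlockSystem (G : Subgroup (Equiv.Perm Y)) (P : Set (Set Y)) : Prop :=
  IsBlockSystem G P ∧ P ≠ SingletonPartition Y ∧
    ∀ Q : Set (Set Y), IsBlockSystem G Q → Refines Q P →
      Q = SingletonPartition Y ∨ Q = P

/-- `fix_G(P)`: elements of `G` stabilizing every block of `P` setwise. -/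
def FixBlocks (G : Subgroup (Equiv.Perm Y)) (P : Set (Set Y)) : Subgroup (Equiv.Perm Y) :=
  G ⊓ ⨅ B ∈ P, MulAction.stabilizer (Equiv.Perm Y) B

/-- The pointwise stabilizer of a set, inside the full symmetric group. -/
def PointStab (A : Set Y) : Subgroup (Equiv.Perm Y) :=
  ⨅ a ∈ A, MulAction.stabilizer (Equiv.Perm Y) a

/-- The support of a subgroup of `Equiv.Perm Y`. -/
def SubSupp (H : Subgroup (Equiv.Perm Y)) : Set Y :=
  {y | ∃ h ∈ H, h y ≠ y}

/-- `N` is a normal subgroup of the subgroup `H`. -/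
def NormalIn {G : Type*} [Group G] (H N : Subgroup G) : Prop :=
  N ≤ H ∧ ∀ h ∈ H, ∀ x ∈ N, h * x * h⁻¹ ∈ N

/-- `N` is a minimal normal subgroup of the subgroup `H`. -/
def MinimalNormalIn {G : Type*} [Group G] (H N : Subgroup G) : Prop :=
  NormalIn H N ∧ N ≠ ⊥ ∧ ∀ M : Subgroup G, NormalIn H M → M ≤ N → M = ⊥ ∨ M = N

/-- The socle of a subgroup `H`: the subgroup generated by the minimal
normal subgroups of `H`. -/
def SocleIn {G : Type*} [Group G] (H : Subgroup G) : Subgroup G :=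
  ⨆ N ∈ {N : Subgroup G | MinimalNormalIn H N}, N

/-- The conjugate subgroup `g⁻¹ H g`. -/
def ConjSub {G : Type*} [Group G] (g : G) (H : Subgroup G) : Subgroup G :=
  Subgroup.map (MulAut.conj g⁻¹).toMonoidHom H

/-- The permutation of an invariant set induced by an element of its setwise stabilizer. -/
def restrictHom {G Y : Type*} [Group G] [MulAction G Y] (A : Set Y) :
    MulAction.stabilizer G A →* Equiv.Perm A where
  toFun g := (MulAction.toPerm (g : G)).subtypePerm (fun y => by
    have hA : (g : G) • A = A := MulAction.mem_stabilizer_iff.mp g.2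
    constructor
    · intro hy
      have hy' : (g : G) • y ∈ A := hy
      have : (g : G) • y ∈ (g : G) • A := by rw [hA]; exact hy'
      exact Set.smul_mem_smul_set_iff.mp this
    · intro hy
      have : (g : G) • y ∈ (g : G) • A := Set.smul_mem_smul_set hy
      rw [hA] at this
      exact this)
  map_one' := by
    ext x
    simp [Equiv.Perm.subtypePerm]
  map_mul' g h := by
    ext x
    simp [Equiv.Perm.subtypePerm, mul_smul]

/-- The permutation group induced on an invariant set `A` by (the setwise stabilizer of `A`
in) a subgroup `H`. -/
def InducedSub {G Y : Type*} [Group G] [MulAction G Y] (H : Subgroup G) (A : Set Y) :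
    Subgroup (Equiv.Perm A) :=
  Subgroup.map (restrictHom A) (H.comap (MulAction.stabilizer G A).subtype)

end PermGroupDefs

section ClassR

/-- The class `𝓡` of groups from Definition 1.7. -/
def IsClassRGroup (R : Type*) [Group R] : Prop :=
  ∃ n : ℕ, 0 < n ∧ Odd n ∧ Squarefree n ∧
    (Nonempty (R ≃* Multiplicative (ZMod n)) ∨
     Nonempty (R ≃* Multiplicative (ZMod n × ZMod 2)) ∨
     Nonempty (R ≃* Multiplicative (ZMod n × ZMod 2 × ZMod 2)) ∨
     Nonempty (R ≃* Multiplicative (ZMod n × ZMod 2 × ZMod 2 × ZMod 2)) ∨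
     Nonempty (R ≃* Multiplicative (ZMod n × ZMod 2 × ZMod 2 × ZMod 2 × ZMod 2)) ∨
     Nonempty (R ≃* Multiplicative (ZMod n × ZMod 4)) ∨
     Nonempty (R ≃* Multiplicative (ZMod n) × QuaternionGroup 2) ∨
     (∃ o : ℕ, (o = 2 ∨ o = 4 ∨ o = 8) ∧
       ∃ ψ : Multiplicative (ZMod o) →* MulAut (Multiplicative (ZMod n)),
         ψ (Multiplicative.ofAdd 1) ≠ 1 ∧ ψ (Multiplicative.ofAdd 1) ^ 2 = 1 ∧
         Nonempty (R ≃* Multiplicative (ZMod n) ⋊[ψ] Multiplicative (ZMod o))))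

end ClassR

section CI

/-- `σ` is an isomorphism between the ternary relational structures `R` and `S`. -/
def TernaryIso {X I : Type*} (R S : I → Set (X × X × X)) (σ : Equiv.Perm X) : Prop :=
  ∀ i, (fun t : X × X × X => (σ t.1, σ t.2.1, σ t.2.2)) '' R i = S i

/-- A ternary relational structure on a group `G` is a Cayley object if all left
translations are automorphisms. -/
def CayleyTernary (G : Type*) [Group G] {I : Type*} (R : I → Set (G × G × G)) : Prop :=
  ∀ g : G, TernaryIso R R (Equiv.mulLeft g)

/-- `G` is a CI-group with respect to ternary relational structures. -/
def IsTernaryCI (G : Type*) [Group G] : Prop :=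
  ∀ (I : Type) (R S : I → Set (G × G × G)), CayleyTernary G R → CayleyTernary G S →
    (∃ σ : Equiv.Perm G, TernaryIso R S σ) →
    ∃ φ : G ≃* G, TernaryIso R S φ.toEquiv

/-- `σ` is an isomorphism between the binary relational structures `R` and `S`. -/
def BinaryIso {X I : Type*} (R S : I → Set (X × X)) (σ : Equiv.Perm X) : Prop :=
  ∀ i, (fun t : X × X => (σ t.1, σ t.2)) '' R i = S i

/-- A binary relational structure on a group `G` is a Cayley object if all left
translations are automorphisms. -/
def CayleyBinary (G : Type*) [Group G] {I : Type*} (R : I → Set (G × G)) : Prop :=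
  ∀ g : G, BinaryIso R R (Equiv.mulLeft g)

/-- `G` is a CI-group with respect to binary relational structures. -/
def IsBinaryCI (G : Type*) [Group G] : Prop :=
  ∀ (I : Type) (R S : I → Set (G × G)), CayleyBinary G R → CayleyBinary G S →
    (∃ σ : Equiv.Perm G, BinaryIso R S σ) →
    ∃ φ : G ≃* G, BinaryIso R S φ.toEquiv

end CI

section Closure

/-- `σ` belongs to the `k`-closure of `G ≤ Sym(Y)`: it preserves every orbit of the
componentwise action of `G` on `Y^k`. -/
def InKClosure {Y : Type*} (k : ℕ) (G : Subgroup (Equiv.Perm Y)) (σ : Equiv.Perm Y) : Prop :=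
  ∀ t : Fin k → Y, ∃ g ∈ G, ∀ i, σ (t i) = g (t i)

/-- `G` is `k`-closed. -/
def IsKClosed {Y : Type*} (k : ℕ) (G : Subgroup (Equiv.Perm Y)) : Prop :=
  ∀ σ : Equiv.Perm Y, InKClosure k G σ → σ ∈ G

/-- The inner holomorph of `G`: the subgroup of `Sym(G)` generated by the left and right
regular representations. -/
def InnerHolomorph (G : Type*) [Group G] : Subgroup (Equiv.Perm G) :=
  Subgroup.closure
    ((Set.range fun g : G => Equiv.mulLeft g) ∪ (Set.range fun g : G => Equiv.mulRight g))

end Closure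

section MyAux
set_option linter.unusedSectionVars false
set_option linter.unusedVariables false
section AuxGroup
variable {G : Type*} [Group G]

lemma normalIn_inf {H A B : Subgroup G} (hA : NormalIn H A) (hB : NormalIn H B) :
    NormalIn H (A ⊓ B) :=
  ⟨le_trans inf_le_left hA.1, fun h hh x hx => ⟨hA.2 h hh x hx.1, hB.2 h hh x hx.2⟩⟩

lemma normalIn_socleIn (H : Subgroup G) : NormalIn H (SocleIn H) := by
  constructor
  · exact iSup₂_le fun N hN => hN.1.1
  · intro h hh x hx
    rw [SocleIn, iSup_subtype'] at hx ⊢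
    refine Subgroup.iSup_induction (C := fun y => h * y * h⁻¹ ∈ ⨆ (N : {N : Subgroup G // MinimalNormalIn H N}), (N : Subgroup G)) _ hx (fun N y hy => ?_) (by simpa using one_mem _) (fun a b ha hb => ?_)
    · exact Subgroup.mem_iSup_of_mem N (N.2.1.2 h hh y hy)
    · show h * (a * b) * h⁻¹ ∈ _
      have heq : h * (a * b) * h⁻¹ = (h * a * h⁻¹) * (h * b * h⁻¹) := by group
      rw [heq]; exact mul_mem ha hb

lemma le_socleIn {H M : Subgroup G} (hM : MinimalNormalIn H M) : M ≤ SocleIn H :=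
  le_iSup₂ (f := fun (N : Subgroup G) (_ : MinimalNormalIn H N) => N) M hM

lemma exists_minimalNormalIn [Finite G] {H : Subgroup G} :
    ∀ (K : Subgroup G), NormalIn H K → K ≠ ⊥ → ∃ M, MinimalNormalIn H M ∧ M ≤ K := by
  have main : ∀ (n : ℕ) (K : Subgroup G), Nat.card K = n → NormalIn H K → K ≠ ⊥ →
      ∃ M, MinimalNormalIn H M ∧ M ≤ K := by
    intro n
    induction n using Nat.strong_induction_on with
    | _ n ih =>
      intro K hn hK hKbot
      by_cases hmin : ∀ M : Subgroup G, NormalIn H M → M ≤ K → M = ⊥ ∨ M = K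
      · exact ⟨K, ⟨hK, hKbot, hmin⟩, le_rfl⟩
      · push_neg at hmin
        obtain ⟨M, hM, hMK, hMbot, hMne⟩ := hmin
        have hlt : M < K := lt_of_le_of_ne hMK hMne
        obtain ⟨M', h1, h2⟩ := ih (Nat.card M)
          (hn ▸ Set.Finite.card_lt_card (Set.toFinite _) (SetLike.coe_ssubset_coe.mpr hlt))
          M rfl hM hMbot
        exact ⟨M', h1, h2.trans hMK⟩
  exact fun K => main (Nat.card K) K rfl

lemma minimalNormalIn_eq_socle {H M : Subgroup G}
    (hs : IsSimpleGroup ↥(SocleIn H)) (hM : MinimalNormalIn H M) : M = SocleIn H := by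
  have hle : M ≤ SocleIn H := le_socleIn hM
  have hnorm : (M.subgroupOf (SocleIn H)).Normal := by
    constructor
    intro n hn g
    have hg : (g : G) ∈ H := (normalIn_socleIn H).1 g.2
    simpa [Subgroup.mem_subgroupOf] using hM.1.2 g hg n (by simpa [Subgroup.mem_subgroupOf] using hn)
  rcases hs.eq_bot_or_eq_top_of_normal _ hnorm with h | h
  · rw [Subgroup.subgroupOf_eq_bot] at h
    exact absurd (h.eq_bot_of_le hle) hM.2.1
  · rw [Subgroup.subgroupOf_eq_top] at h
    exact le_antisymm hle h

end AuxGroup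

section AuxGroup2
variable {G : Type*} [Group G]

lemma socle_le_of_normalIn [Finite G] {H K : Subgroup G}
    (hs : IsSimpleGroup ↥(SocleIn H)) (hK : NormalIn H K) (hne : K ≠ ⊥) : SocleIn H ≤ K := by
  obtain ⟨M, hM, hMK⟩ := exists_minimalNormalIn K hK hne
  exact (minimalNormalIn_eq_socle hs hM) ▸ hMK

lemma socle_nonabelian_of_noncomm {H : Subgroup G}
    (hTnonab : ∃ a b : ↥(SocleIn H), a * b ≠ b * a) :
    ¬ ∀ a ∈ SocleIn H, ∀ b ∈ SocleIn H, a * b = b * a := by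
  rintro h
  obtain ⟨a, b, hab⟩ := hTnonab
  exact hab (Subtype.ext (h a a.2 b b.2))

lemma eq_one_of_centralizes_socle [Finite G] {H : Subgroup G}
    (hs : IsSimpleGroup ↥(SocleIn H)) (hTnonab : ∃ a b : ↥(SocleIn H), a * b ≠ b * a)
    {σ : G} (hσ : σ ∈ H) (hc : ∀ t ∈ SocleIn H, σ * t = t * σ) : σ = 1 := by
  set C := Subgroup.centralizer (SocleIn H : Set G) ⊓ H with hC
  have hCnorm : NormalIn H C := by
    constructor
    · exact inf_le_right
    · intro h hh x hx
      rw [hC, Subgroup.mem_inf] at hx ⊢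
      obtain ⟨hx1, hx2⟩ := hx
      refine ⟨Subgroup.mem_centralizer_iff.mpr fun t ht => ?_, mul_mem (mul_mem hh hx2) (inv_mem hh)⟩
      have ht' : h⁻¹ * t * h ∈ SocleIn H := by
        have := (normalIn_socleIn H).2 h⁻¹ (inv_mem hh) t ht
        simpa [mul_assoc] using this
      have hx1' := Subgroup.mem_centralizer_iff.mp hx1 _ ht'
      have key : t * (h * x * h⁻¹) = h * ((h⁻¹ * t * h) * x) * h⁻¹ := by group
      rw [key, hx1']
      group
  have hCbot : C = ⊥ := by
    by_contra hne
    have hle : SocleIn H ≤ C := socle_le_of_normalIn hs hCnorm hne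
    refine socle_nonabelian_of_noncomm hTnonab fun a ha b hb => ?_
    have := (Subgroup.mem_inf.mp (hle ha)).1
    exact (Subgroup.mem_centralizer_iff.mp this b hb).symm
  have hmem : σ ∈ C := by
    rw [hC, Subgroup.mem_inf]
    exact ⟨Subgroup.mem_centralizer_iff.mpr fun t ht => (hc t ht).symm, hσ⟩
  rwa [hCbot, Subgroup.mem_bot] at hmem

lemma minimalNormalIn_disjoint {H M₁ M₂ : Subgroup G}
    (h1 : MinimalNormalIn H M₁) (h2 : MinimalNormalIn H M₂) (hne : M₁ ≠ M₂) : M₁ ⊓ M₂ = ⊥ := by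
  have hn : NormalIn H (M₁ ⊓ M₂) := normalIn_inf h1.1 h2.1
  rcases h1.2.2 _ hn inf_le_left with h | h
  · exact h
  · rcases h2.2.2 _ hn inf_le_right with h' | h'
    · exact h'
    · exact absurd (h ▸ h' : M₁ = M₂).symm (Ne.symm hne)

lemma minimalNormalIn_commute {H M₁ M₂ : Subgroup G}
    (h1 : MinimalNormalIn H M₁) (h2 : MinimalNormalIn H M₂) (hne : M₁ ≠ M₂)
    {a b : G} (ha : a ∈ M₁) (hb : b ∈ M₂) : a * b = b * a := by
  have hcomm : a * b * a⁻¹ * b⁻¹ ∈ M₁ ⊓ M₂ := by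
    constructor
    · have h1' : a * (b * a⁻¹ * b⁻¹) ∈ M₁ :=
        mul_mem ha (by simpa [mul_assoc] using h1.1.2 b (h2.1.1 hb) a⁻¹ (inv_mem ha))
      simpa [mul_assoc] using h1'
    · have h2' : (a * b * a⁻¹) * b⁻¹ ∈ M₂ :=
        mul_mem (h2.1.2 a (h1.1.1 ha) b hb) (inv_mem hb)
      simpa [mul_assoc] using h2'
  rw [minimalNormalIn_disjoint h1 h2 hne, Subgroup.mem_bot] at hcomm
  calc a * b = (a * b * a⁻¹ * b⁻¹) * (b * a) := by group
    _ = b * a := by rw [hcomm]; group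

end AuxGroup2

section AuxMap
variable {G : Type*} [Group G]

lemma map_symm_map_aux (e : G ≃* G) (K : Subgroup G) :
    Subgroup.map e.symm.toMonoidHom (Subgroup.map e.toMonoidHom K) = K := by
  ext x
  rw [Subgroup.mem_map_equiv, Subgroup.mem_map_equiv]
  simp

lemma map_map_symm_aux (e : G ≃* G) (K : Subgroup G) :
    Subgroup.map e.toMonoidHom (Subgroup.map e.symm.toMonoidHom K) = K := by
  have := map_symm_map_aux e.symm K
  simpa using this

lemma mem_map_equiv_iff (e : G ≃* G) (K : Subgroup G) (x : G) :
    x ∈ Subgroup.map e.toMonoidHom K ↔ e.symm x ∈ K := by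
  rw [Subgroup.mem_map_equiv]

lemma normalIn_map (e : G ≃* G) {H K : Subgroup G} (hH : Subgroup.map e.toMonoidHom H = H)
    (h : NormalIn H K) : NormalIn H (Subgroup.map e.toMonoidHom K) := by
  constructor
  · exact hH ▸ Subgroup.map_mono h.1
  · intro g hg x hx
    obtain ⟨k, hk, rfl⟩ := hx
    have hg' : e.symm g ∈ H := by
      rw [← hH, Subgroup.mem_map_equiv] at hg
      simpa using hg
    refine ⟨e.symm g * k * (e.symm g)⁻¹, h.2 _ hg' k hk, ?_⟩
    simp [mul_assoc]

lemma map_symm_eq_self (e : G ≃* G) {H : Subgroup G} (hH : Subgroup.map e.toMonoidHom H = H) :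
    Subgroup.map e.symm.toMonoidHom H = H := by
  conv_lhs => rw [← hH]
  exact map_symm_map_aux e H

lemma minimalNormalIn_map (e : G ≃* G) {H K : Subgroup G}
    (hH : Subgroup.map e.toMonoidHom H = H) (h : MinimalNormalIn H K) :
    MinimalNormalIn H (Subgroup.map e.toMonoidHom K) := by
  refine ⟨normalIn_map e hH h.1, ?_, ?_⟩
  · intro hbot
    apply h.2.1
    have := congrArg (Subgroup.map e.symm.toMonoidHom) hbot
    rwa [map_symm_map_aux, Subgroup.map_bot] at this
  · intro M hM hMK
    have hM' : NormalIn H (Subgroup.map e.symm.toMonoidHom M) :=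
      normalIn_map e.symm (map_symm_eq_self e hH) hM
    have hMK' : Subgroup.map e.symm.toMonoidHom M ≤ K := by
      have := Subgroup.map_mono (f := e.symm.toMonoidHom) hMK
      rwa [map_symm_map_aux] at this
    rcases h.2.2 _ hM' hMK' with hb | he
    · left
      have := congrArg (Subgroup.map e.toMonoidHom) hb
      rwa [map_map_symm_aux, Subgroup.map_bot] at this
    · right
      have := congrArg (Subgroup.map e.toMonoidHom) he
      rwa [map_map_symm_aux] at this

end AuxMap

section PermAux
variable {X : Type*}

lemma smul_set_eq_image (g : Equiv.Perm X) (B : Set X) : g • B = ⇑g '' B := by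
  ext x
  simp only [Set.mem_smul_set, Equiv.Perm.smul_def, Set.mem_image]

lemma mem_pointStab {A : Set X} {σ : Equiv.Perm X} : σ ∈ PointStab A ↔ ∀ a ∈ A, σ a = a := by
  simp [PointStab, Subgroup.mem_iInf, MulAction.mem_stabilizer_iff, Equiv.Perm.smul_def]

lemma mem_fixBlocks {G : Subgroup (Equiv.Perm X)} {𝓑 : Set (Set X)} {σ : Equiv.Perm X} :
    σ ∈ FixBlocks G 𝓑 ↔ σ ∈ G ∧ ∀ B ∈ 𝓑, σ • B = B := by
  simp [FixBlocks, Subgroup.mem_inf, Subgroup.mem_iInf, MulAction.mem_stabilizer_iff]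

lemma mem_subSupp {H : Subgroup (Equiv.Perm X)} {x : X} : x ∈ SubSupp H ↔ ∃ h ∈ H, h x ≠ x :=
  Iff.rfl

lemma restrictHom_apply {B : Set X} (g : MulAction.stabilizer (Equiv.Perm X) B) (x : B) :
    ((restrictHom B g) x : X) = (g : Equiv.Perm X) x := rfl

lemma mem_inducedSub {H : Subgroup (Equiv.Perm X)} {B : Set X} {σ : Equiv.Perm B} :
    σ ∈ InducedSub H B ↔
      ∃ g : MulAction.stabilizer (Equiv.Perm X) B, (g : Equiv.Perm X) ∈ H ∧ restrictHom B g = σ := by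
  simp only [InducedSub, Subgroup.mem_map, Subgroup.mem_comap]
  rfl

lemma mem_smul_set_perm {g : Equiv.Perm X} {B : Set X} {x : X} :
    x ∈ g • B ↔ g⁻¹ x ∈ B := by
  rw [Set.mem_smul_set_iff_inv_smul_mem]
  rfl

variable {G : Subgroup (Equiv.Perm X)} {𝓑 : Set (Set X)}

lemma blocks_smul (hBS : IsBlockSystem G 𝓑) {g : Equiv.Perm X} (hg : g ∈ G) {B : Set X}
    (hB : B ∈ 𝓑) : g • B ∈ 𝓑 := by
  rw [smul_set_eq_image]
  exact hBS.2.2 g hg B hB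

lemma block_unique (hBS : IsBlockSystem G 𝓑) {B B' : Set X} (hB : B ∈ 𝓑) (hB' : B' ∈ 𝓑)
    {x : X} (hx : x ∈ B) (hx' : x ∈ B') : B = B' := by
  obtain ⟨C, _, hC⟩ := hBS.2.1 x
  rw [hC B ⟨hB, hx⟩, hC B' ⟨hB', hx'⟩]

lemma exists_block (hBS : IsBlockSystem G 𝓑) (x : X) : ∃ B ∈ 𝓑, x ∈ B := by
  obtain ⟨C, hC, _⟩ := hBS.2.1 x
  exact ⟨C, hC.1, hC.2⟩

lemma trans_blocks (hBS : IsBlockSystem G 𝓑) (hG : SubTrans G) {B B' : Set X}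
    (hB : B ∈ 𝓑) (hB' : B' ∈ 𝓑) : ∃ g ∈ G, g • B = B' := by
  obtain ⟨x, hx⟩ := hBS.1 B hB
  obtain ⟨y, hy⟩ := hBS.1 B' hB'
  obtain ⟨g, hg, hgxy⟩ := hG x y
  refine ⟨g, hg, ?_⟩
  refine block_unique hBS (blocks_smul hBS hg hB) hB' (x := y) ?_ hy
  rw [mem_smul_set_perm, ← hgxy]
  simpa using hx

lemma fixBlocks_mem_stab {n : Equiv.Perm X} (hn : n ∈ FixBlocks G 𝓑) {B : Set X} (hB : B ∈ 𝓑) :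
    n ∈ MulAction.stabilizer (Equiv.Perm X) B :=
  MulAction.mem_stabilizer_iff.mpr ((mem_fixBlocks.mp hn).2 B hB)

lemma fixBlocks_conj (hBS : IsBlockSystem G 𝓑) {g n : Equiv.Perm X} (hg : g ∈ G)
    (hn : n ∈ FixBlocks G 𝓑) : g * n * g⁻¹ ∈ FixBlocks G 𝓑 := by
  rw [mem_fixBlocks] at hn ⊢
  refine ⟨mul_mem (mul_mem hg hn.1) (inv_mem hg), fun B hB => ?_⟩
  have h1 : g⁻¹ • B ∈ 𝓑 := blocks_smul hBS (inv_mem hg) hB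
  have h2 := hn.2 _ h1
  calc (g * n * g⁻¹) • B = g • n • g⁻¹ • B := by rw [mul_smul, mul_smul]
    _ = g • g⁻¹ • B := by rw [h2]
    _ = B := by rw [smul_inv_smul]

lemma fixBlocks_map_conj (hBS : IsBlockSystem G 𝓑) {g : Equiv.Perm X} (hg : g ∈ G) :
    Subgroup.map (MulAut.conj g).toMonoidHom (FixBlocks G 𝓑) = FixBlocks G 𝓑 := by
  apply le_antisymm
  · rintro x ⟨n, hn, rfl⟩
    simpa using fixBlocks_conj hBS hg hn
  · intro n hn
    refine ⟨g⁻¹ * n * g, ?_, by simp [mul_assoc]⟩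
    simpa [mul_assoc] using fixBlocks_conj hBS (inv_mem hg) hn

lemma subSupp_map_conj (g : Equiv.Perm X) (L : Subgroup (Equiv.Perm X)) :
    SubSupp (Subgroup.map (MulAut.conj g).toMonoidHom L) = g • SubSupp L := by
  ext x
  rw [mem_smul_set_perm]
  constructor
  · rintro ⟨h, ⟨l, hl, rfl⟩, hmove⟩
    refine ⟨l, hl, fun heq => hmove ?_⟩
    show (g * l * g⁻¹) x = x
    rw [Equiv.Perm.mul_apply, Equiv.Perm.mul_apply, heq]
    simp
  · rintro ⟨l, hl, hmove⟩
    refine ⟨g * l * g⁻¹, ⟨l, hl, rfl⟩, fun heq => hmove ?_⟩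
    have : g⁻¹ ((g * l * g⁻¹) x) = g⁻¹ x := by rw [heq]
    simpa using this

end PermAux

section KeyB0
variable {X : Type*} [Finite X] {G : Subgroup (Equiv.Perm X)} {𝓑 : Set (Set X)} {B₀ : Set X}

lemma le_stab_of_le_fixBlocks (hB₀ : B₀ ∈ 𝓑) {L : Subgroup (Equiv.Perm X)}
    (hL : L ≤ FixBlocks G 𝓑) : L ≤ MulAction.stabilizer (Equiv.Perm X) B₀ :=
  fun _ hl => fixBlocks_mem_stab (hL hl) hB₀

lemma mem_inducedSub_of_mem (hB₀ : B₀ ∈ 𝓑) {L : Subgroup (Equiv.Perm X)}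
    (hL : L ≤ FixBlocks G 𝓑) {l : Equiv.Perm X} (hl : l ∈ L) :
    restrictHom B₀ ⟨l, le_stab_of_le_fixBlocks hB₀ hL hl⟩ ∈ InducedSub L B₀ :=
  mem_inducedSub.mpr ⟨⟨l, le_stab_of_le_fixBlocks hB₀ hL hl⟩, hl, rfl⟩

lemma restrictHom_eq_one_iff {g : MulAction.stabilizer (Equiv.Perm X) B₀} :
    restrictHom B₀ g = 1 ↔ ∀ x ∈ B₀, (g : Equiv.Perm X) x = x := by
  constructor
  · intro h x hx
    have := congrArg (fun σ : Equiv.Perm B₀ => (σ ⟨x, hx⟩ : X)) h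
    simpa [restrictHom_apply] using this
  · intro h
    ext x
    exact h x x.2

lemma inducedSub_normalIn (hB₀ : B₀ ∈ 𝓑) {L : Subgroup (Equiv.Perm X)}
    (hL : NormalIn (FixBlocks G 𝓑) L) :
    NormalIn (InducedSub (FixBlocks G 𝓑) B₀) (InducedSub L B₀) := by
  constructor
  · exact Subgroup.map_mono (Subgroup.comap_mono hL.1)
  · intro σ hσ x hx
    obtain ⟨g, hgN, rfl⟩ := mem_inducedSub.mp hσ
    obtain ⟨l, hlL, rfl⟩ := mem_inducedSub.mp hx
    rw [← map_inv, ← map_mul, ← map_mul]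
    exact mem_inducedSub.mpr ⟨g * l * g⁻¹, hL.2 g hgN l hlL, rfl⟩

lemma socle_nontrivial_elt
    (hTsimple : IsSimpleGroup ↥(SocleIn (InducedSub (FixBlocks G 𝓑) B₀))) :
    ∃ t ∈ SocleIn (InducedSub (FixBlocks G 𝓑) B₀), t ≠ (1 : Equiv.Perm B₀) := by
  rw [← Subgroup.nontrivial_iff_exists_ne_one]
  infer_instance

lemma inducedSub_eq_socle (hB₀ : B₀ ∈ 𝓑)
    (hTsimple : IsSimpleGroup ↥(SocleIn (InducedSub (FixBlocks G 𝓑) B₀)))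
    {L : Subgroup (Equiv.Perm X)} (hL : MinimalNormalIn (FixBlocks G 𝓑) L)
    (hmove : ∃ x ∈ B₀, ∃ l ∈ L, l x ≠ x) :
    InducedSub L B₀ = SocleIn (InducedSub (FixBlocks G 𝓑) B₀) := by
  have hLN : L ≤ FixBlocks G 𝓑 := hL.1.1
  have hnorm := inducedSub_normalIn hB₀ hL.1
  have hne : InducedSub L B₀ ≠ ⊥ := by
    obtain ⟨x, hx, l, hl, hlx⟩ := hmove
    intro hbot
    have hmem := mem_inducedSub_of_mem hB₀ hLN hl
    rw [hbot, Subgroup.mem_bot] at hmem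
    exact hlx (restrictHom_eq_one_iff.mp hmem x hx)
  have hTle := socle_le_of_normalIn hTsimple hnorm hne
  refine le_antisymm ?_ hTle
  set T := SocleIn (InducedSub (FixBlocks G 𝓑) B₀) with hT
  set Q : Subgroup (Equiv.Perm X) :=
    Subgroup.map (MulAction.stabilizer (Equiv.Perm X) B₀).subtype
      (Subgroup.comap (restrictHom B₀) T) with hQ
  have hmemQ : ∀ y : Equiv.Perm X, y ∈ Q ↔
      ∃ g : MulAction.stabilizer (Equiv.Perm X) B₀, restrictHom B₀ g ∈ T ∧ (g : Equiv.Perm X) = y := by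
    intro y
    rw [hQ]
    simp [Subgroup.mem_map, Subgroup.mem_comap]
  have hQL : NormalIn (FixBlocks G 𝓑) (L ⊓ Q) := by
    constructor
    · exact inf_le_left.trans hLN
    · intro n hn x hx
      refine ⟨hL.1.2 n hn x hx.1, ?_⟩
      obtain ⟨gx, hgx, rfl⟩ := (hmemQ x).mp hx.2
      have hnstab : n ∈ MulAction.stabilizer (Equiv.Perm X) B₀ := fixBlocks_mem_stab hn hB₀
      refine (hmemQ _).mpr ⟨⟨n, hnstab⟩ * gx * ⟨n, hnstab⟩⁻¹, ?_, rfl⟩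
      rw [map_mul, map_mul, map_inv]
      have hφn : restrictHom B₀ ⟨n, hnstab⟩ ∈ InducedSub (FixBlocks G 𝓑) B₀ :=
        mem_inducedSub_of_mem hB₀ le_rfl hn
      exact (normalIn_socleIn (InducedSub (FixBlocks G 𝓑) B₀)).2 _ hφn _ hgx
  have hQLne : L ⊓ Q ≠ ⊥ := by
    obtain ⟨t, ht, htne⟩ := socle_nontrivial_elt hTsimple
    obtain ⟨g, hgL, rfl⟩ := mem_inducedSub.mp (hTle ht)
    intro hbot
    have : (g : Equiv.Perm X) ∈ L ⊓ Q := ⟨hgL, (hmemQ _).mpr ⟨g, ht, rfl⟩⟩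
    rw [hbot, Subgroup.mem_bot] at this
    apply htne
    have : g = 1 := Subtype.ext this
    rw [this, map_one]
  rcases hL.2.2 _ hQL inf_le_left with hbot | heq
  · exact absurd hbot hQLne
  · have hLQ : L ≤ Q := heq ▸ inf_le_right
    intro σ hσ
    obtain ⟨g, hgL, rfl⟩ := mem_inducedSub.mp hσ
    obtain ⟨g', hg', hcoe⟩ := (hmemQ _).mp (hLQ hgL)
    rwa [show g' = g from Subtype.ext hcoe] at hg'

lemma minimal_inf_pointStab_eq_bot {B : Set X} (hB : B ∈ 𝓑)
    {L : Subgroup (Equiv.Perm X)} (hL : MinimalNormalIn (FixBlocks G 𝓑) L)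
    (hmove : ∃ x ∈ B, ∃ l ∈ L, l x ≠ x) :
    L ⊓ PointStab B = ⊥ := by
  have hLN : L ≤ FixBlocks G 𝓑 := hL.1.1
  have hnorm : NormalIn (FixBlocks G 𝓑) (L ⊓ PointStab B) := by
    constructor
    · exact inf_le_left.trans hLN
    · intro n hn x hx
      refine ⟨hL.1.2 n hn x hx.1, mem_pointStab.mpr fun a ha => ?_⟩
      have hnstab : n ∈ MulAction.stabilizer (Equiv.Perm X) B := fixBlocks_mem_stab hn hB
      have hinv : n⁻¹ a ∈ B := by
        have : (n⁻¹ : Equiv.Perm X) • B = B := MulAction.mem_stabilizer_iff.mp (inv_mem hnstab)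
        rw [← this, mem_smul_set_perm]
        simpa using ha
      have hfix := mem_pointStab.mp hx.2 _ hinv
      calc (n * x * n⁻¹) a = n (x (n⁻¹ a)) := by rw [Equiv.Perm.mul_apply, Equiv.Perm.mul_apply]
        _ = n (n⁻¹ a) := by rw [hfix]
        _ = a := by simp
  rcases hL.2.2 _ hnorm inf_le_left with hbot | heq
  · exact hbot
  · exfalso
    obtain ⟨x, hx, l, hl, hlx⟩ := hmove
    rw [← heq] at hl
    exact hlx (mem_pointStab.mp hl.2 x hx)

lemma minimal_iso_socle (hB₀ : B₀ ∈ 𝓑)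
    (hTsimple : IsSimpleGroup ↥(SocleIn (InducedSub (FixBlocks G 𝓑) B₀)))
    {L : Subgroup (Equiv.Perm X)} (hL : MinimalNormalIn (FixBlocks G 𝓑) L)
    (hmove : ∃ x ∈ B₀, ∃ l ∈ L, l x ≠ x) :
    Nonempty (↥L ≃* ↥(SocleIn (InducedSub (FixBlocks G 𝓑) B₀))) := by
  have hLN : L ≤ FixBlocks G 𝓑 := hL.1.1
  have hsub : L ≤ MulAction.stabilizer (Equiv.Perm X) B₀ := le_stab_of_le_fixBlocks hB₀ hLN
  set ρ : ↥L →* Equiv.Perm B₀ := (restrictHom B₀).comp (Subgroup.inclusion hsub) with hρ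
  have hIndL : ∀ σ : Equiv.Perm B₀, σ ∈ InducedSub L B₀ ↔ ∃ l : ↥L, ρ l = σ := by
    intro σ
    rw [mem_inducedSub]
    constructor
    · rintro ⟨g, hgL, rfl⟩
      exact ⟨⟨g, hgL⟩, rfl⟩
    · rintro ⟨l, rfl⟩
      exact ⟨Subgroup.inclusion hsub l, l.2, rfl⟩
  have hsoc := inducedSub_eq_socle hB₀ hTsimple hL hmove
  have hmemT : ∀ l : ↥L, ρ l ∈ SocleIn (InducedSub (FixBlocks G 𝓑) B₀) := by
    intro l
    rw [← hsoc]
    exact (hIndL _).mpr ⟨l, rfl⟩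
  refine ⟨MulEquiv.ofBijective (ρ.codRestrict _ hmemT) ⟨?_, ?_⟩⟩
  · rw [injective_iff_map_eq_one]
    intro l hl
    have hρl : ρ l = 1 := by
      have := congrArg (Subtype.val) hl
      simpa using this
    have hfix : ∀ x ∈ B₀, (l : Equiv.Perm X) x = x := restrictHom_eq_one_iff.mp hρl
    have : (l : Equiv.Perm X) ∈ L ⊓ PointStab B₀ := ⟨l.2, mem_pointStab.mpr hfix⟩
    rw [minimal_inf_pointStab_eq_bot hB₀ hL hmove, Subgroup.mem_bot] at this
    exact Subtype.ext this
  · rintro ⟨t, ht⟩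
    rw [← hsoc] at ht
    obtain ⟨l, hl⟩ := (hIndL t).mp ht
    exact ⟨l, Subtype.ext (by simpa using hl)⟩

lemma fix_of_centralizes (hB₀ : B₀ ∈ 𝓑)
    (hTsimple : IsSimpleGroup ↥(SocleIn (InducedSub (FixBlocks G 𝓑) B₀)))
    (hTnonab : ∃ a b : ↥(SocleIn (InducedSub (FixBlocks G 𝓑) B₀)), a * b ≠ b * a)
    {L : Subgroup (Equiv.Perm X)} (hL : MinimalNormalIn (FixBlocks G 𝓑) L)
    (hmove : ∃ x ∈ B₀, ∃ l ∈ L, l x ≠ x)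
    {k : Equiv.Perm X} (hk : k ∈ FixBlocks G 𝓑) (hcomm : ∀ l ∈ L, k * l = l * k) :
    ∀ x ∈ B₀, k x = x := by
  have hkstab : k ∈ MulAction.stabilizer (Equiv.Perm X) B₀ := fixBlocks_mem_stab hk hB₀
  set σ : Equiv.Perm B₀ := restrictHom B₀ ⟨k, hkstab⟩ with hσ
  have hσmem : σ ∈ InducedSub (FixBlocks G 𝓑) B₀ := mem_inducedSub_of_mem hB₀ le_rfl hk
  have hsoc := inducedSub_eq_socle hB₀ hTsimple hL hmove
  have hc : ∀ t ∈ SocleIn (InducedSub (FixBlocks G 𝓑) B₀), σ * t = t * σ := by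
    intro t ht
    rw [← hsoc] at ht
    obtain ⟨g, hgL, rfl⟩ := mem_inducedSub.mp ht
    have hmulc : (⟨k, hkstab⟩ : MulAction.stabilizer (Equiv.Perm X) B₀) * g = g * ⟨k, hkstab⟩ :=
      Subtype.ext (hcomm _ hgL)
    rw [hσ, ← map_mul, ← map_mul, hmulc]
  have := eq_one_of_centralizes_socle hTsimple hTnonab hσmem hc
  exact restrictHom_eq_one_iff.mp this

lemma exists_two_block (hBS : IsBlockSystem G 𝓑) (hB₀ : B₀ ∈ 𝓑)
    (hTnonab : ∃ a b : ↥(SocleIn (InducedSub (FixBlocks G 𝓑) B₀)), a * b ≠ b * a) :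
    ∃ x ∈ B₀, ∃ y ∈ B₀, x ≠ y := by
  by_contra h
  push_neg at h
  haveI : Subsingleton B₀ := ⟨fun a b => Subtype.ext (h a a.2 b b.2)⟩
  haveI : Subsingleton (Equiv.Perm B₀) := ⟨fun f g => Equiv.ext fun x => Subsingleton.elim _ _⟩
  obtain ⟨a, b, hab⟩ := hTnonab
  exact hab (Subtype.ext (Subsingleton.elim _ _))

lemma block_sub_supp_B₀ (hBS : IsBlockSystem G 𝓑) (hB₀ : B₀ ∈ 𝓑)
    (hTtrans : SubTrans (SocleIn (InducedSub (FixBlocks G 𝓑) B₀)))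
    (hTsimple : IsSimpleGroup ↥(SocleIn (InducedSub (FixBlocks G 𝓑) B₀)))
    (hTnonab : ∃ a b : ↥(SocleIn (InducedSub (FixBlocks G 𝓑) B₀)), a * b ≠ b * a)
    {L : Subgroup (Equiv.Perm X)} (hL : MinimalNormalIn (FixBlocks G 𝓑) L)
    (hmove : ∃ x ∈ B₀, ∃ l ∈ L, l x ≠ x) :
    B₀ ⊆ SubSupp L := by
  intro x hx
  obtain ⟨a, ha, b, hb, hab⟩ := exists_two_block hBS hB₀ hTnonab
  have hy : ∃ y ∈ B₀, y ≠ x := by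
    by_cases hax : a = x
    · exact ⟨b, hb, fun hbx => hab (hax.trans hbx.symm)⟩
    · exact ⟨a, ha, hax⟩
  obtain ⟨y, hy, hyx⟩ := hy
  obtain ⟨t, ht, htx⟩ := hTtrans ⟨x, hx⟩ ⟨y, hy⟩
  rw [← inducedSub_eq_socle hB₀ hTsimple hL hmove] at ht
  obtain ⟨g, hgL, rfl⟩ := mem_inducedSub.mp ht
  refine ⟨g, hgL, ?_⟩
  have : ((restrictHom B₀ g) ⟨x, hx⟩ : X) = y := by rw [htx]
  rw [restrictHom_apply] at this
  rw [this]
  exact hyx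

end KeyB0

section Global
variable {X : Type*} [Finite X] {G : Subgroup (Equiv.Perm X)} {𝓑 : Set (Set X)} {B₀ : Set X}

lemma conj_min (hBS : IsBlockSystem G 𝓑) {g : Equiv.Perm X} (hg : g ∈ G)
    {L : Subgroup (Equiv.Perm X)} (hL : MinimalNormalIn (FixBlocks G 𝓑) L) :
    MinimalNormalIn (FixBlocks G 𝓑) (Subgroup.map (MulAut.conj g).toMonoidHom L) :=
  minimalNormalIn_map _ (fixBlocks_map_conj hBS hg) hL

lemma hmove_conj {g : Equiv.Perm X} {B' : Set X} (hgB : g • B₀ = B')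
    {L : Subgroup (Equiv.Perm X)} (h : ∃ x ∈ B', ∃ l ∈ L, l x ≠ x) :
    ∃ x ∈ B₀, ∃ l ∈ Subgroup.map (MulAut.conj g⁻¹).toMonoidHom L, l x ≠ x := by
  obtain ⟨x, hx, l, hl, hlx⟩ := h
  have hxB : g⁻¹ x ∈ B₀ := by
    rw [← hgB, mem_smul_set_perm] at hx
    exact hx
  refine ⟨g⁻¹ x, hxB, g⁻¹ * l * g, ⟨l, hl, by simp⟩, ?_⟩
  intro heq
  apply hlx
  have h1 : (g⁻¹ * l * g) (g⁻¹ x) = g⁻¹ (l x) := by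
    rw [Equiv.Perm.mul_apply, Equiv.Perm.mul_apply]
    simp
  rw [h1] at heq
  have := congrArg g heq
  simpa using this

lemma block_sub_supp (hBS : IsBlockSystem G 𝓑) (hG : SubTrans G) (hB₀ : B₀ ∈ 𝓑)
    (hTtrans : SubTrans (SocleIn (InducedSub (FixBlocks G 𝓑) B₀)))
    (hTsimple : IsSimpleGroup ↥(SocleIn (InducedSub (FixBlocks G 𝓑) B₀)))
    (hTnonab : ∃ a b : ↥(SocleIn (InducedSub (FixBlocks G 𝓑) B₀)), a * b ≠ b * a)
    {L : Subgroup (Equiv.Perm X)} (hL : MinimalNormalIn (FixBlocks G 𝓑) L)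
    {B' : Set X} (hB' : B' ∈ 𝓑) (hint : (SubSupp L ∩ B').Nonempty) :
    B' ⊆ SubSupp L := by
  obtain ⟨g, hg, hgB⟩ := trans_blocks hBS hG hB₀ hB'
  have hL' := conj_min hBS (inv_mem hg) hL
  have hmove' : ∃ x ∈ B₀, ∃ l ∈ Subgroup.map (MulAut.conj g⁻¹).toMonoidHom L, l x ≠ x := by
    refine hmove_conj hgB ?_
    obtain ⟨x, hxs, hxB⟩ := hint
    obtain ⟨l, hl, hlx⟩ := hxs
    exact ⟨x, hxB, l, hl, hlx⟩
  have hsub := block_sub_supp_B₀ hBS hB₀ hTtrans hTsimple hTnonab hL' hmove'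
  intro z hz
  have hz0 : g⁻¹ z ∈ B₀ := by
    rw [← hgB, mem_smul_set_perm] at hz
    exact hz
  have := hsub hz0
  rw [subSupp_map_conj] at this
  rw [mem_smul_set_perm] at this
  simpa using this

lemma supp_nonempty {L : Subgroup (Equiv.Perm X)} (hL : L ≠ ⊥) : (SubSupp L).Nonempty := by
  obtain ⟨l, hlne⟩ := Subgroup.ne_bot_iff_exists_ne_one.mp hL
  have : ∃ x, (l : Equiv.Perm X) x ≠ x := by
    by_contra h
    push_neg at h
    exact hlne (Subtype.ext (Equiv.ext h))
  obtain ⟨x, hx⟩ := this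
  exact ⟨x, l, l.2, hx⟩

lemma minimal_iso_global (hBS : IsBlockSystem G 𝓑) (hG : SubTrans G) (hB₀ : B₀ ∈ 𝓑)
    (hTtrans : SubTrans (SocleIn (InducedSub (FixBlocks G 𝓑) B₀)))
    (hTsimple : IsSimpleGroup ↥(SocleIn (InducedSub (FixBlocks G 𝓑) B₀)))
    (hTnonab : ∃ a b : ↥(SocleIn (InducedSub (FixBlocks G 𝓑) B₀)), a * b ≠ b * a)
    {L : Subgroup (Equiv.Perm X)} (hL : MinimalNormalIn (FixBlocks G 𝓑) L) :
    Nonempty (↥L ≃* ↥(SocleIn (InducedSub (FixBlocks G 𝓑) B₀))) := by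
  obtain ⟨x, hx⟩ := supp_nonempty hL.2.1
  obtain ⟨B', hB', hxB'⟩ := exists_block hBS x
  obtain ⟨g, hg, hgB⟩ := trans_blocks hBS hG hB₀ hB'
  have hL' := conj_min hBS (inv_mem hg) hL
  have hmove' := hmove_conj (B₀ := B₀) hgB (⟨x, hxB', hx.choose, hx.choose_spec.1, hx.choose_spec.2⟩)
  obtain ⟨e⟩ := minimal_iso_socle hB₀ hTsimple hL' hmove'
  have hinj : Function.Injective (MulAut.conj g⁻¹).toMonoidHom := (MulAut.conj g⁻¹).injective
  exact ⟨(Subgroup.equivMapOfInjective L _ hinj).trans e⟩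

lemma supp_disjoint (hBS : IsBlockSystem G 𝓑) (hG : SubTrans G) (hB₀ : B₀ ∈ 𝓑)
    (hTtrans : SubTrans (SocleIn (InducedSub (FixBlocks G 𝓑) B₀)))
    (hTsimple : IsSimpleGroup ↥(SocleIn (InducedSub (FixBlocks G 𝓑) B₀)))
    (hTnonab : ∃ a b : ↥(SocleIn (InducedSub (FixBlocks G 𝓑) B₀)), a * b ≠ b * a)
    {L₁ L₂ : Subgroup (Equiv.Perm X)} (h1 : MinimalNormalIn (FixBlocks G 𝓑) L₁)
    (h2 : MinimalNormalIn (FixBlocks G 𝓑) L₂) (hne : L₁ ≠ L₂) :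
    Disjoint (SubSupp L₁) (SubSupp L₂) := by
  rw [Set.disjoint_left]
  intro x hx1 hx2
  obtain ⟨B', hB', hxB'⟩ := exists_block hBS x
  obtain ⟨g, hg, hgB⟩ := trans_blocks hBS hG hB₀ hB'
  set e := MulAut.conj g⁻¹ with he
  have h1' := conj_min hBS (inv_mem hg) h1
  have h2' := conj_min hBS (inv_mem hg) h2
  have hmove1 := hmove_conj (B₀ := B₀) hgB (⟨x, hxB', hx1.choose, hx1.choose_spec.1, hx1.choose_spec.2⟩)
  have hmove2 := hmove_conj (B₀ := B₀) hgB (⟨x, hxB', hx2.choose, hx2.choose_spec.1, hx2.choose_spec.2⟩)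
  have hne' : Subgroup.map e.toMonoidHom L₁ ≠ Subgroup.map e.toMonoidHom L₂ := by
    intro h
    apply hne
    have := congrArg (Subgroup.map e.symm.toMonoidHom) h
    rwa [map_symm_map_aux, map_symm_map_aux] at this
  have hsoc1 := inducedSub_eq_socle hB₀ hTsimple h1' hmove1
  have hsoc2 := inducedSub_eq_socle hB₀ hTsimple h2' hmove2
  refine socle_nonabelian_of_noncomm hTnonab fun a ha b hb => ?_
  rw [← hsoc1] at ha
  rw [← hsoc2] at hb
  obtain ⟨ga, hga, rfl⟩ := mem_inducedSub.mp ha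
  obtain ⟨gb, hgb, rfl⟩ := mem_inducedSub.mp hb
  have hcomm : (ga : Equiv.Perm X) * gb = gb * ga := minimalNormalIn_commute h1' h2' hne' hga hgb
  rw [← map_mul, ← map_mul, show ga * gb = gb * ga from Subtype.ext hcomm]

lemma fixBlocks_ne_bot (hB₀ : B₀ ∈ 𝓑)
    (hTsimple : IsSimpleGroup ↥(SocleIn (InducedSub (FixBlocks G 𝓑) B₀))) :
    FixBlocks G 𝓑 ≠ ⊥ := by
  obtain ⟨t, ht, htne⟩ := socle_nontrivial_elt hTsimple
  have : t ∈ InducedSub (FixBlocks G 𝓑) B₀ := (normalIn_socleIn _).1 ht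
  obtain ⟨g, hgN, rfl⟩ := mem_inducedSub.mp this
  intro hbot
  apply htne
  have : (g : Equiv.Perm X) = 1 := by
    rw [hbot, Subgroup.mem_bot] at hgN
    exact hgN
  rw [show g = 1 from Subtype.ext this, map_one]

lemma exists_minimal_cover (hBS : IsBlockSystem G 𝓑) (hG : SubTrans G) (hB₀ : B₀ ∈ 𝓑)
    (hTtrans : SubTrans (SocleIn (InducedSub (FixBlocks G 𝓑) B₀)))
    (hTsimple : IsSimpleGroup ↥(SocleIn (InducedSub (FixBlocks G 𝓑) B₀)))
    (hTnonab : ∃ a b : ↥(SocleIn (InducedSub (FixBlocks G 𝓑) B₀)), a * b ≠ b * a)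
    {B' : Set X} (hB' : B' ∈ 𝓑) :
    ∃ L, MinimalNormalIn (FixBlocks G 𝓑) L ∧ B' ⊆ SubSupp L := by
  obtain ⟨L₀, hL₀, _⟩ := exists_minimalNormalIn (FixBlocks G 𝓑)
    ⟨le_rfl, fun h hh x hx => mul_mem (mul_mem hh hx) (inv_mem hh)⟩ (fixBlocks_ne_bot hB₀ hTsimple)
  obtain ⟨x₀, hx₀⟩ := supp_nonempty hL₀.2.1
  obtain ⟨B₁, hB₁, hx₀B⟩ := exists_block hBS x₀
  have hB₁sub : B₁ ⊆ SubSupp L₀ :=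
    block_sub_supp hBS hG hB₀ hTtrans hTsimple hTnonab hL₀ hB₁ ⟨x₀, hx₀, hx₀B⟩
  obtain ⟨g, hg, hgB⟩ := trans_blocks hBS hG hB₁ hB'
  refine ⟨Subgroup.map (MulAut.conj g).toMonoidHom L₀, conj_min hBS hg hL₀, ?_⟩
  rw [subSupp_map_conj, ← hgB]
  exact Set.smul_set_mono hB₁sub

lemma fix_inf_pointStab_normalIn (hBS : IsBlockSystem G 𝓑) {B : Set X} (hB : B ∈ 𝓑) :
    NormalIn (FixBlocks G 𝓑) (FixBlocks G 𝓑 ⊓ PointStab B) := by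
  constructor
  · exact inf_le_left
  · intro n hn x hx
    obtain ⟨hx1, hx2⟩ := hx
    refine ⟨fixBlocks_conj hBS (mem_fixBlocks.mp hn).1 hx1, mem_pointStab.mpr fun a ha => ?_⟩
    have hnstab : n ∈ MulAction.stabilizer (Equiv.Perm X) B := fixBlocks_mem_stab hn hB
    have hinv : n⁻¹ a ∈ B := by
      have : (n⁻¹ : Equiv.Perm X) • B = B := MulAction.mem_stabilizer_iff.mp (inv_mem hnstab)
      rw [← this, mem_smul_set_perm]
      simpa using ha
    have hfix := mem_pointStab.mp hx2 _ hinv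
    calc (n * x * n⁻¹) a = n (x (n⁻¹ a)) := by rw [Equiv.Perm.mul_apply, Equiv.Perm.mul_apply]
      _ = n (n⁻¹ a) := by rw [hfix]
      _ = a := by simp

lemma pointStab_piece (hBS : IsBlockSystem G 𝓑) (hG : SubTrans G) (hB₀ : B₀ ∈ 𝓑)
    (hTtrans : SubTrans (SocleIn (InducedSub (FixBlocks G 𝓑) B₀)))
    (hTsimple : IsSimpleGroup ↥(SocleIn (InducedSub (FixBlocks G 𝓑) B₀)))
    (hTnonab : ∃ a b : ↥(SocleIn (InducedSub (FixBlocks G 𝓑) B₀)), a * b ≠ b * a)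
    {L : Subgroup (Equiv.Perm X)} (hL : MinimalNormalIn (FixBlocks G 𝓑) L)
    {B : Set X} (hB : B ∈ 𝓑) (hBsub : B ⊆ SubSupp L)
    {k : Equiv.Perm X} (hkN : k ∈ FixBlocks G 𝓑) (hkP : k ∈ PointStab B) :
    ∀ x ∈ SubSupp L, k x = x := by
  have hmoveB : ∃ x ∈ B, ∃ l ∈ L, l x ≠ x := by
    obtain ⟨x₁, hx₁⟩ := hBS.1 B hB
    obtain ⟨l, hl, hlx⟩ := hBsub hx₁
    exact ⟨x₁, hx₁, l, hl, hlx⟩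
  have hKLbot : L ⊓ PointStab B = ⊥ := minimal_inf_pointStab_eq_bot hB hL hmoveB
  have hcomm : ∀ l ∈ L, k * l = l * k := by
    intro l hl
    have hc1 : k * l * k⁻¹ * l⁻¹ ∈ L := by
      have h1 : k * l * k⁻¹ ∈ L := hL.1.2 k hkN l hl
      exact mul_mem h1 (inv_mem hl)
    have hc2 : k * l * k⁻¹ * l⁻¹ ∈ PointStab B := by
      have hK : k⁻¹ ∈ FixBlocks G 𝓑 ⊓ PointStab B := inv_mem ⟨hkN, hkP⟩
      have hlN : l ∈ FixBlocks G 𝓑 := hL.1.1 hl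
      have h2 : l * k⁻¹ * l⁻¹ ∈ FixBlocks G 𝓑 ⊓ PointStab B :=
        (fix_inf_pointStab_normalIn hBS hB).2 l hlN k⁻¹ hK
      have h3 : k * (l * k⁻¹ * l⁻¹) ∈ FixBlocks G 𝓑 ⊓ PointStab B := mul_mem ⟨hkN, hkP⟩ h2
      have heq : k * (l * k⁻¹ * l⁻¹) = k * l * k⁻¹ * l⁻¹ := by group
      rw [heq] at h3
      exact h3.2
    have : k * l * k⁻¹ * l⁻¹ ∈ L ⊓ PointStab B := ⟨hc1, hc2⟩
    rw [hKLbot, Subgroup.mem_bot] at this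
    calc k * l = (k * l * k⁻¹ * l⁻¹) * (l * k) := by group
      _ = l * k := by rw [this]; group
  intro x hx
  obtain ⟨B', hB', hxB'⟩ := exists_block hBS x
  have hB'sub : B' ⊆ SubSupp L :=
    block_sub_supp hBS hG hB₀ hTtrans hTsimple hTnonab hL hB' ⟨x, hx, hxB'⟩
  obtain ⟨g, hg, hgB⟩ := trans_blocks hBS hG hB₀ hB'
  have hL' := conj_min hBS (inv_mem hg) hL
  have hmove' : ∃ y ∈ B₀, ∃ l ∈ Subgroup.map (MulAut.conj g⁻¹).toMonoidHom L, l y ≠ y := by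
    refine hmove_conj hgB ?_
    obtain ⟨l, hl, hlx⟩ := hB'sub hxB'
    exact ⟨x, hxB', l, hl, hlx⟩
  have hk' : g⁻¹ * k * g ∈ FixBlocks G 𝓑 := by
    have := fixBlocks_conj hBS (inv_mem hg) hkN
    simpa using this
  have hcomm' : ∀ l' ∈ Subgroup.map (MulAut.conj g⁻¹).toMonoidHom L, (g⁻¹ * k * g) * l' = l' * (g⁻¹ * k * g) := by
    rintro l' ⟨l, hl, rfl⟩
    show (g⁻¹ * k * g) * (g⁻¹ * l * g⁻¹⁻¹) = (g⁻¹ * l * g⁻¹⁻¹) * (g⁻¹ * k * g)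
    have h1 : (g⁻¹ * k * g) * (g⁻¹ * l * g⁻¹⁻¹) = g⁻¹ * (k * l) * g := by group
    have h2 : (g⁻¹ * l * g⁻¹⁻¹) * (g⁻¹ * k * g) = g⁻¹ * (l * k) * g := by group
    rw [h1, h2, hcomm l hl]
  have hfix := fix_of_centralizes hB₀ hTsimple hTnonab hL' hmove' hk' hcomm'
  have hx0 : g⁻¹ x ∈ B₀ := by
    rw [← hgB, mem_smul_set_perm] at hxB'
    exact hxB'
  have := hfix _ hx0
  have h2 : (g⁻¹ * k * g) (g⁻¹ x) = g⁻¹ (k x) := by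
    rw [Equiv.Perm.mul_apply, Equiv.Perm.mul_apply]
    simp
  rw [h2] at this
  have := congrArg g this
  simpa using this

end Global

end MyAux

/-- Lemma 4.3, parts (1) and (2). -/
theorem statement3 {X : Type*} [Finite X] (G : Subgroup (Equiv.Perm X)) (hG : SubTrans G)
    (𝓑 : Set (Set X)) (h𝓑 : IsNormalBlockSystem G 𝓑) (B₀ : Set X) (hB₀ : B₀ ∈ 𝓑)
    (hTtrans : SubTrans (SocleIn (InducedSub (FixBlocks G 𝓑) B₀)))
    (hTsimple : IsSimpleGroup ↥(SocleIn (InducedSub (FixBlocks G 𝓑) B₀)))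
    (hTnonab : ∃ a b : ↥(SocleIn (InducedSub (FixBlocks G 𝓑) B₀)), a * b ≠ b * a) :
    ∃ (k : ℕ) (Tfac : Fin k → Subgroup (Equiv.Perm X)),
      0 < k ∧
      -- Soc(N) is the internal direct product T₁ × ⋯ × T_k :
      (∀ i, Tfac i ≤ SocleIn (FixBlocks G 𝓑)) ∧
      (⨆ i, Tfac i) = SocleIn (FixBlocks G 𝓑) ∧
      iSupIndep Tfac ∧
      (∀ i j, i ≠ j → ∀ a ∈ Tfac i, ∀ b ∈ Tfac j, a * b = b * a) ∧
      -- each factor is isomorphic to T :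
      (∀ i, Nonempty (↥(Tfac i) ≃* ↥(SocleIn (InducedSub (FixBlocks G 𝓑) B₀)))) ∧
      -- the supports are pairwise disjoint and form a block system coarser than 𝓑 :
      (∀ i j, i ≠ j → Disjoint (SubSupp (Tfac i)) (SubSupp (Tfac j))) ∧
      IsBlockSystem G (Set.range fun i => SubSupp (Tfac i)) ∧
      Refines 𝓑 (Set.range fun i => SubSupp (Tfac i)) ∧
      -- part (2): pointwise stabilizers
      (∀ i, ∀ B ∈ 𝓑, B ⊆ SubSupp (Tfac i) →
        FixBlocks G 𝓑 ⊓ PointStab B = FixBlocks G 𝓑 ⊓ PointStab (SubSupp (Tfac i)) ∧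
        (FixBlocks G 𝓑 ⊓ PointStab B) ⊓ Tfac i = ⊥) := by
  classical
  obtain ⟨hBS, -⟩ := h𝓑
  haveI : Finite (Equiv.Perm X) := by infer_instance
  set 𝓜 := {L : Subgroup (Equiv.Perm X) | MinimalNormalIn (FixBlocks G 𝓑) L} with h𝓜
  have hMne : 𝓜.Nonempty := by
    obtain ⟨L, hL, -⟩ := exists_minimal_cover hBS hG hB₀ hTtrans hTsimple hTnonab hB₀
    exact ⟨L, hL⟩
  haveI : Nonempty ↥𝓜 := Set.nonempty_coe_sort.mpr hMne
  set k := Nat.card ↥𝓜 with hk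
  set e : Fin k ≃ ↥𝓜 := (Finite.equivFin ↥𝓜).symm with he
  refine ⟨k, fun i => ((e i : ↥𝓜) : Subgroup (Equiv.Perm X)), ?_, ?_, ?_, ?_, ?_, ?_, ?_, ?_, ?_, ?_⟩
  case _ => exact Nat.card_pos
  case _ => exact fun i => le_socleIn (e i).2
  case _ =>
    apply le_antisymm
    · exact iSup_le fun i => le_socleIn (e i).2
    · refine iSup₂_le fun L hL => ?_
      have : L = ((e (e.symm ⟨L, hL⟩) : ↥𝓜) : Subgroup (Equiv.Perm X)) := by simp
      rw [this]
      exact le_iSup (fun i => ((e i : ↥𝓜) : Subgroup (Equiv.Perm X))) (e.symm ⟨L, hL⟩)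
  case _ =>
    intro i
    rw [Subgroup.disjoint_def]
    intro x hxi hxsup
    have hne : ∀ j, j ≠ i → ((e j : ↥𝓜) : Subgroup (Equiv.Perm X)) ≠ ((e i : ↥𝓜) : Subgroup (Equiv.Perm X)) := by
      intro j hj heq
      exact hj (e.injective (Subtype.ext heq))
    have hsup_le : (⨆ j, ⨆ (_ : j ≠ i), ((e j : ↥𝓜) : Subgroup (Equiv.Perm X))) ≤
        PointStab (SubSupp ((e i : ↥𝓜) : Subgroup (Equiv.Perm X))) := by
      refine iSup_le fun j => iSup_le fun hj => ?_
      intro σ hσ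
      rw [mem_pointStab]
      intro a ha
      by_contra hmova
      have haj : a ∈ SubSupp ((e j : ↥𝓜) : Subgroup (Equiv.Perm X)) := ⟨σ, hσ, hmova⟩
      exact Set.disjoint_left.mp
        (supp_disjoint hBS hG hB₀ hTtrans hTsimple hTnonab (e j).2 (e i).2 (hne j hj)) haj ha
    have hxP := mem_pointStab.mp (hsup_le hxsup)
    ext a
    show x a = a
    by_cases haC : a ∈ SubSupp ((e i : ↥𝓜) : Subgroup (Equiv.Perm X))
    · exact hxP a haC
    · by_contra hmv
      exact haC ⟨x, hxi, hmv⟩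
  case _ =>
    intro i j hij a ha b hb
    refine minimalNormalIn_commute (e i).2 (e j).2 ?_ ha hb
    intro heq
    exact hij (e.injective (Subtype.ext heq))
  case _ =>
    exact fun i => minimal_iso_global hBS hG hB₀ hTtrans hTsimple hTnonab (e i).2
  case _ =>
    intro i j hij
    refine supp_disjoint hBS hG hB₀ hTtrans hTsimple hTnonab (e i).2 (e j).2 ?_
    intro heq
    exact hij (e.injective (Subtype.ext heq))
  case _ =>
    refine ⟨?_, ?_, ?_⟩
    · rintro C ⟨i, rfl⟩
      exact supp_nonempty (e i).2.2.1
    · intro x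
      obtain ⟨B', hB', hxB'⟩ := exists_block hBS x
      obtain ⟨L, hL, hB'sub⟩ := exists_minimal_cover hBS hG hB₀ hTtrans hTsimple hTnonab hB'
      set i := e.symm ⟨L, hL⟩ with hi
      have hTi : ((e i : ↥𝓜) : Subgroup (Equiv.Perm X)) = L := by simp [hi]
      refine ⟨SubSupp L, ⟨⟨i, ?_⟩, hB'sub hxB'⟩, ?_⟩
      · show SubSupp ((e i : ↥𝓜) : Subgroup (Equiv.Perm X)) = SubSupp L
        rw [hTi]
      rintro C' ⟨⟨j, rfl⟩, hxC'⟩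
      show SubSupp ((e j : ↥𝓜) : Subgroup (Equiv.Perm X)) = SubSupp L
      by_cases heq : ((e j : ↥𝓜) : Subgroup (Equiv.Perm X)) = L
      · rw [heq]
      · exfalso
        have hdisj := supp_disjoint hBS hG hB₀ hTtrans hTsimple hTnonab (e j).2 hL heq
        exact Set.disjoint_left.mp hdisj hxC' (hB'sub hxB')
    · rintro g hg C ⟨i, rfl⟩
      have : (g : Equiv.Perm X) '' SubSupp ((e i : ↥𝓜) : Subgroup (Equiv.Perm X)) =
          SubSupp (Subgroup.map (MulAut.conj g).toMonoidHom ((e i : ↥𝓜) : Subgroup (Equiv.Perm X))) := by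
        rw [subSupp_map_conj, smul_set_eq_image]
      rw [this]
      have hmin := conj_min hBS hg (e i).2
      set j := e.symm ⟨_, hmin⟩ with hj
      exact ⟨j, by simp [hj]⟩
  case _ =>
    intro B hB
    obtain ⟨L, hL, hBsub⟩ := exists_minimal_cover hBS hG hB₀ hTtrans hTsimple hTnonab hB
    set i := e.symm ⟨L, hL⟩ with hi
    exact ⟨SubSupp ((e i : ↥𝓜) : Subgroup (Equiv.Perm X)), ⟨i, rfl⟩, by simpa [hi] using hBsub⟩
  case _ =>
    intro i B hB hBsub
    set L := ((e i : ↥𝓜) : Subgroup (Equiv.Perm X)) with hL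
    have hLmin : MinimalNormalIn (FixBlocks G 𝓑) L := (e i).2
    have hmoveB : ∃ x ∈ B, ∃ l ∈ L, l x ≠ x := by
      obtain ⟨x₁, hx₁⟩ := hBS.1 B hB
      obtain ⟨l, hl, hlx⟩ := hBsub hx₁
      exact ⟨x₁, hx₁, l, hl, hlx⟩
    constructor
    · apply le_antisymm
      · rintro κ ⟨hκN, hκP⟩
        exact ⟨hκN, mem_pointStab.mpr
          (pointStab_piece hBS hG hB₀ hTtrans hTsimple hTnonab hLmin hB hBsub hκN hκP)⟩
      · rintro κ ⟨hκN, hκP⟩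
        refine ⟨hκN, mem_pointStab.mpr fun a ha => mem_pointStab.mp hκP a (hBsub ha)⟩
    · rw [eq_bot_iff]
      intro x hx
      have : x ∈ L ⊓ PointStab B := ⟨hx.2, hx.1.2⟩
      rwa [minimal_inf_pointStab_eq_bot hB hLmin hmoveB] at this
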